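/- With S, T, τ defined as below, the following identities hold: ST = C (the edge adjacency matrix), ST − τ = B (the non-backtracking matrix), TτS = D (the degree matrix), and TS = A (the adjacency matrix). Consequently B[S T^T] = [S T^T]K, where K = [[A, D−I],[−I, 0]]. -/

import Mathlib

open Matrix

variable {V : Type*} [Fintype V] [DecidableEq V]

/-- The non-backtracking matrix `B (u,v) (x,y) = 1` iff `v = x` and `u ≠ y`. -/
def nbMatrix (G : SimpleGraph V) [DecidableRel G.Adj] : Matrix G.Dart G.Dart ℂ :=
  Matrix.of fun d e => if d.toProd.2 = e.toProd.1 ∧ d.toProd.1 ≠ e.toProd.2 then 1 else 0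

/-- The edge adjacency matrix `C (u,v) (x,y) = 1` iff `v = x`. -/
def edgeAdj (G : SimpleGraph V) [DecidableRel G.Adj] : Matrix G.Dart G.Dart ℂ :=
  Matrix.of fun d e => if d.toProd.2 = e.toProd.1 then 1 else 0

/-- The edge-reversal operator `τ (u,v) (x,y) = 1` iff `v = x` and `u = y`. -/
def tauMatrix (G : SimpleGraph V) [DecidableRel G.Adj] : Matrix G.Dart G.Dart ℂ :=
  Matrix.of fun d e => if d.toProd.2 = e.toProd.1 ∧ d.toProd.1 = e.toProd.2 then 1 else 0

/-- `S (u,v) x = 1` iff `v = x`. -/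
def Smatrix (G : SimpleGraph V) [DecidableRel G.Adj] : Matrix G.Dart V ℂ :=
  Matrix.of fun d x => if d.toProd.2 = x then 1 else 0

/-- `T x (u,v) = 1` iff `x = u`. -/
def Tmatrix (G : SimpleGraph V) [DecidableRel G.Adj] : Matrix V G.Dart ℂ :=
  Matrix.of fun x d => if x = d.toProd.1 then 1 else 0

/-- The matrix `K = [[A, D-I], [-I, 0]]`. -/
def Kmatrix (G : SimpleGraph V) [DecidableRel G.Adj] : Matrix (V ⊕ V) (V ⊕ V) ℂ :=
  Matrix.fromBlocks (G.adjMatrix ℂ) (Matrix.diagonal (fun v => (G.degree v : ℂ)) - 1) (-1) 0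

/-! `τ` is the permutation matrix of dart reversal, so `τ S = Tᵀ` and `τ Tᵀ = S`. Together with
`T S = A` and `T Tᵀ = D`, the identity `B = S T - τ` gives `B S = S A - Tᵀ` and
`B Tᵀ = S (D - I)`, which are the two block columns of `[S Tᵀ] K`. -/

namespace SimpleGraph

variable (G : SimpleGraph V) [DecidableRel G.Adj]

theorem sum_dart_indicator_toProd_eq (x y : V) :
    ∑ d : G.Dart, (if d.toProd = (x, y) then (1 : ℂ) else 0) = if G.Adj x y then 1 else 0 := by
  split_ifs with h
  · simp_rw [← Dart.ext_iff _ (⟨(x, y), h⟩ : G.Dart)]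
    simp
  · refine Finset.sum_eq_zero fun d _ => if_neg fun hd => h ?_
    simpa [hd] using d.adj

theorem Smatrix_mul_Tmatrix : Smatrix G * Tmatrix G = edgeAdj G := by
  ext d e
  simp [Smatrix, Tmatrix, edgeAdj, mul_apply, eq_comm]

theorem Tmatrix_mul_Smatrix : Tmatrix G * Smatrix G = G.adjMatrix ℂ := by
  ext x y
  rw [adjMatrix_apply, ← sum_dart_indicator_toProd_eq]
  simp [Tmatrix, Smatrix, mul_apply, Prod.ext_iff, eq_comm, ← ite_and, and_comm]

theorem Smatrix_mul_Tmatrix_sub_tauMatrix :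
    Smatrix G * Tmatrix G - tauMatrix G = nbMatrix G := by
  ext d e
  rw [Smatrix_mul_Tmatrix]
  by_cases h : d.snd = e.fst <;> by_cases h' : d.fst = e.snd <;>
    simp [edgeAdj, tauMatrix, nbMatrix, h, h']

theorem tauMatrix_mul {α : Type*} (M : Matrix G.Dart α ℂ) :
    tauMatrix G * M = M.submatrix Dart.symm id := by
  have tau_apply (d e : G.Dart) : tauMatrix G d e = if d.symm = e then 1 else 0 := by
    simp [tauMatrix, Dart.ext_iff, Prod.ext_iff, eq_comm]
  ext d x
  simp [mul_apply, tau_apply]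

theorem tauMatrix_mul_Smatrix : tauMatrix G * Smatrix G = (Tmatrix G)ᵀ := by
  ext d x
  simp [tauMatrix_mul, Smatrix, Tmatrix, eq_comm]

theorem tauMatrix_mul_transpose_Tmatrix : tauMatrix G * (Tmatrix G)ᵀ = Smatrix G := by
  ext d x
  simp [tauMatrix_mul, Smatrix, Tmatrix, eq_comm]

theorem Tmatrix_mul_transpose_Tmatrix :
    Tmatrix G * (Tmatrix G)ᵀ = diagonal fun v => (G.degree v : ℂ) := by
  ext x y
  by_cases h : x = y
  · subst h
    simp [Tmatrix, mul_apply, ← dart_fst_fiber_card_eq_degree, Finset.sum_boole, eq_comm,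
      ← ite_and]
  · rw [diagonal_apply_ne _ h]
    refine Finset.sum_eq_zero fun d _ => ?_
    rcases eq_or_ne x d.fst with rfl | hx
    · simp [Tmatrix, Ne.symm h]
    · simp [Tmatrix, hx]

theorem Tmatrix_mul_tauMatrix_mul_Smatrix :
    Tmatrix G * tauMatrix G * Smatrix G = diagonal fun v => (G.degree v : ℂ) := by
  rw [Matrix.mul_assoc, tauMatrix_mul_Smatrix, Tmatrix_mul_transpose_Tmatrix]

theorem nbMatrix_mul_Smatrix :
    nbMatrix G * Smatrix G = Smatrix G * G.adjMatrix ℂ - (Tmatrix G)ᵀ := by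
  rw [← Smatrix_mul_Tmatrix_sub_tauMatrix, Matrix.sub_mul, Matrix.mul_assoc, Tmatrix_mul_Smatrix,
    tauMatrix_mul_Smatrix]

theorem nbMatrix_mul_transpose_Tmatrix :
    nbMatrix G * (Tmatrix G)ᵀ = Smatrix G * (diagonal (fun v => (G.degree v : ℂ)) - 1) := by
  rw [← Smatrix_mul_Tmatrix_sub_tauMatrix, Matrix.sub_mul, Matrix.mul_assoc,
    Tmatrix_mul_transpose_Tmatrix, tauMatrix_mul_transpose_Tmatrix, Matrix.mul_sub,
    Matrix.mul_one]

end SimpleGraph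

/-- The identities `ST = C`, `ST - τ = B`, `TτS = D`, `TS = A`, and consequently
`B [S Tᵀ] = [S Tᵀ] K`. -/
theorem st_tau_identities (G : SimpleGraph V) [DecidableRel G.Adj] :
    Smatrix G * Tmatrix G = edgeAdj G ∧
    Smatrix G * Tmatrix G - tauMatrix G = nbMatrix G ∧
    Tmatrix G * tauMatrix G * Smatrix G = Matrix.diagonal (fun v => (G.degree v : ℂ)) ∧
    Tmatrix G * Smatrix G = G.adjMatrix ℂ ∧
    nbMatrix G * Matrix.fromCols (Smatrix G) (Tmatrix G)ᵀ
      = Matrix.fromCols (Smatrix G) (Tmatrix G)ᵀ * Kmatrix G := by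
  refine ⟨G.Smatrix_mul_Tmatrix, G.Smatrix_mul_Tmatrix_sub_tauMatrix,
    G.Tmatrix_mul_tauMatrix_mul_Smatrix, G.Tmatrix_mul_Smatrix, ?_⟩
  rw [Kmatrix, fromCols_mul_fromBlocks, mul_fromCols, G.nbMatrix_mul_Smatrix,
    G.nbMatrix_mul_transpose_Tmatrix, Matrix.mul_neg, Matrix.mul_one, Matrix.mul_zero, add_zero,
    sub_eq_add_neg]
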